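/- Let P₁,…,P_r be polytopes in ℝ^d such that P = P₁ + ⋯ + P_r is d-dimensional and 0 lies in the interior of P. Then the dual of the Cayley cone associated to P₁,…,P_r is C(P₁,…,P_r)^∨ = ℝ≥0 · conv( { (x, (−min⟨P₁,x⟩, …, −min⟨P_r,x⟩)) : x an extreme point of P* } ∪ { (0,e₁), …, (0,e_r) } ) ⊆ ℝ^d × ℝ^r, where min⟨P_i, x⟩ denotes min_{p ∈ P_i} ⟨p, x⟩. -/

import Mathlib

open Pointwise

noncomputable section

/-- The standard inner product on `n → ℝ`. -/
def dot {n : Type*} [Fintype n] (x y : n → ℝ) : ℝ := ∑ i, x i * y i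

/-- The lattice points of `n → ℝ`: points with integer coordinates. -/
def latt (n : Type*) [Fintype n] : Set (n → ℝ) := {x | ∀ i, ∃ m : ℤ, x i = (m : ℝ)}

/-- Polar dual `S* = {y | ⟨x,y⟩ ≥ -1 ∀ x ∈ S}`. -/
def polarDual {n : Type*} [Fintype n] (S : Set (n → ℝ)) : Set (n → ℝ) :=
  {y | ∀ x ∈ S, -1 ≤ dot x y}

/-- `[S]`: the convex hull of the lattice points of `S`. -/
def latticeHull {n : Type*} [Fintype n] (S : Set (n → ℝ)) : Set (n → ℝ) :=
  convexHull ℝ (S ∩ latt n)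

/-- A polytope: the convex hull of a finite set. -/
def IsPolytope {n : Type*} [Fintype n] (P : Set (n → ℝ)) : Prop :=
  ∃ F : Set (n → ℝ), F.Finite ∧ P = convexHull ℝ F

/-- A lattice polytope: the convex hull of a finite set of lattice points. -/
def IsLatticePolytope {n : Type*} [Fintype n] (P : Set (n → ℝ)) : Prop :=
  ∃ F : Set (n → ℝ), F.Finite ∧ F ⊆ latt n ∧ P = convexHull ℝ F

/-- A full-dimensional polytope `P` with `0` in its interior is Q-reflexive if
`[[P]*] = P*`. -/
def IsQReflexive {n : Type*} [Fintype n] (P : Set (n → ℝ)) : Prop :=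
  IsPolytope P ∧ 0 ∈ interior P ∧ latticeHull (polarDual (latticeHull P)) = polarDual P

/-- A full-dimensional lattice polytope `P` with `0` in its interior is almost reflexive
if `[[P*]*] = P`. -/
def IsAlmostReflexive {n : Type*} [Fintype n] (P : Set (n → ℝ)) : Prop :=
  IsLatticePolytope P ∧ 0 ∈ interior P ∧
    latticeHull (polarDual (latticeHull (polarDual P))) = P

/-- A full-dimensional lattice polytope `P` with `0` in its interior is reflexive
if `P*` is a lattice polytope. -/
def IsReflexive {n : Type*} [Fintype n] (P : Set (n → ℝ)) : Prop :=
  IsLatticePolytope P ∧ 0 ∈ interior P ∧ IsLatticePolytope (polarDual P)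

/-- The cone `ℝ≥0 · S` over a set `S`. -/
def coneOver {n : Type*} [Fintype n] (S : Set (n → ℝ)) : Set (n → ℝ) :=
  {z | ∃ t : ℝ, 0 ≤ t ∧ ∃ x ∈ S, z = t • x}

/-- The dual cone `σ^∨ = {y | ⟨x,y⟩ ≥ 0 ∀ x ∈ σ}`. -/
def dualCone {n : Type*} [Fintype n] (σ : Set (n → ℝ)) : Set (n → ℝ) :=
  {y | ∀ x ∈ σ, 0 ≤ dot x y}

/-- The point `(x, y) ∈ ℝ^d × ℝ^r`. -/
def pairPt {d r : ℕ} (x : Fin d → ℝ) (y : Fin r → ℝ) : (Fin d ⊕ Fin r) → ℝ :=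
  Sum.elim x y

/-- The `j`-th standard basis vector of `ℝ^r`. -/
def stdB {r : ℕ} (j : Fin r) : Fin r → ℝ := fun k => if k = j then 1 else 0

/-- The Cayley cone `C(P₁,…,P_r) = ℝ≥0 · conv((P₁ × {e₁}) ∪ ⋯ ∪ (P_r × {e_r}))`
in `ℝ^d × ℝ^r`. -/
def cayley {d r : ℕ} (P : Fin r → Set (Fin d → ℝ)) : Set ((Fin d ⊕ Fin r) → ℝ) :=
  coneOver (convexHull ℝ (⋃ j, (fun x => pairPt x (stdB j)) '' P j))

/-!
An element `(x, y)` of `ℝ^d × ℝ^r` lies in `C(P₁,…,P_r)^∨` iff `y_j ≥ -min⟨P_j, x⟩` for all `j`,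
so it is `(x, -min⟨P_•, x⟩)` plus a nonnegative combination of the `(0, e_j)`. Since
`min⟨P, x⟩ = ∑ min⟨P_j, x⟩ < 0` for `x ≠ 0`, we may rescale so that this sum is `-1`; then `x` lies
on the face `F = {z ∈ P* | ⟨v, z⟩ = -1}` of `P*` exposed by a minimiser `v = ∑ v_j` of `⟨·, x⟩`
on `P`. On `F` every `min⟨P_j, ·⟩` equals `⟨v_j, ·⟩`, so `z ↦ (z, -min⟨P_•, z⟩)` is linear there,
and Minkowski's theorem writes `x` as a convex combination of extreme points of `F`, which are
extreme points of `P*`.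
-/

open Topology Filter Matrix

section Minkowski

variable {E : Type*} [NormedAddCommGroup E] [NormedSpace ℝ E]

lemma vectorSpan_add_eq_top {s : Set E} (hne : s.Nonempty) {W' : Submodule ℝ E}
    (hW : IsCompl (vectorSpan ℝ s) W') : vectorSpan ℝ (s + (W' : Set E)) = ⊤ := by
  obtain ⟨p, hp⟩ := hne
  have hsK : s ⊆ s + (W' : Set E) := Set.subset_add_left s W'.zero_mem
  refine eq_top_iff.2 fun v _ => ?_
  obtain ⟨a, ha, b, hb, rfl⟩ := Submodule.mem_sup.1 (hW.sup_eq_top ▸ Submodule.mem_top :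
    v ∈ vectorSpan ℝ s ⊔ W')
  refine add_mem (vectorSpan_mono ℝ hsK ha) ?_
  simpa using vsub_mem_vectorSpan ℝ (Set.add_mem_add hp hb) (hsK hp)

lemma notMem_interior_add_of_isCompl {s : Set E} {W' : Submodule ℝ E}
    (hW : IsCompl (vectorSpan ℝ s) W') {p u : E} (hp : p ∈ s) (hu : u ∈ vectorSpan ℝ s)
    (hout : ∀ t : ℝ, 0 < t → p + t • u ∉ s) : p ∉ interior (s + (W' : Set E)) := by
  intro hpK
  have hlim : Tendsto (fun t : ℝ => p + t • u) (𝓝[>] 0) (𝓝 p) := by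
    have hc : Continuous fun t : ℝ => p + t • u := by fun_prop
    simpa using (hc.tendsto 0).mono_left nhdsWithin_le_nhds
  obtain ⟨t, htK, ht⟩ :=
    ((hlim.eventually (mem_interior_iff_mem_nhds.1 hpK)).and self_mem_nhdsWithin).exists
  obtain ⟨a, ha, b, hb, hab⟩ := Set.mem_add.1 htK
  have hbW : b ∈ vectorSpan ℝ s := by
    have : b = (p - a) + t • u := by
      calc b = (a + b) - a := by abel
        _ = (p - a) + t • u := by rw [hab]; abel
    rw [this]
    exact add_mem (vsub_mem_vectorSpan ℝ hp ha) (Submodule.smul_mem _ t hu)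
  have hb0 : b = 0 := (Submodule.disjoint_def.1 hW.disjoint) b hbW hb
  exact hout t ht (by rw [← hab, hb0, add_zero]; exact ha)

lemma exists_forall_le_of_forall_add_smul_notMem [FiniteDimensional ℝ E] {s : Set E}
    (hconv : Convex ℝ s) {p u : E} (hp : p ∈ s) (hu : u ∈ vectorSpan ℝ s)
    (hout : ∀ t : ℝ, 0 < t → p + t • u ∉ s) :
    ∃ f : StrongDual ℝ E, (∀ z ∈ s, f z ≤ f p) ∧ ∃ w ∈ vectorSpan ℝ s, f w ≠ 0 := by
  obtain ⟨W', hW⟩ := Submodule.exists_isCompl (vectorSpan ℝ s)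
  -- thickening `s` by a complement of its span makes it full-dimensional
  set K := s + (W' : Set E)
  have hK : Convex ℝ K := hconv.add W'.convex
  have hint : (interior K).Nonempty := by
    rw [hK.interior_nonempty_iff_affineSpan_eq_top,
      ← AffineSubspace.direction_eq_top_iff_of_nonempty
        ((affineSpan_nonempty (k := ℝ)).2 ⟨p, Set.subset_add_left s W'.zero_mem hp⟩),
      direction_affineSpan, vectorSpan_add_eq_top ⟨p, hp⟩ hW]
  obtain ⟨f, hf⟩ := geometric_hahn_banach_open_point hK.interior isOpen_interior
    (notMem_interior_add_of_isCompl hW hp hu hout)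
  have hfK : ∀ z ∈ K, f z ≤ f p := by
    have hcl : closure (interior K) ⊆ {z | f z ≤ f p} :=
      closure_minimal (fun z hz => (hf z hz).le) (isClosed_le f.continuous continuous_const)
    rw [hK.closure_interior_eq_closure_of_nonempty_interior hint] at hcl
    exact fun z hz => hcl (subset_closure hz)
  have hfW' : ∀ b ∈ W', f b = 0 := by
    intro b hb
    have key : ∀ c : ℝ, c * f b ≤ 0 := fun c => by
      have := hfK (p + c • b) (Set.add_mem_add hp (W'.smul_mem c hb))
      rw [map_add, map_smul, smul_eq_mul] at this
      linarith
    nlinarith [key (f b)]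
  refine ⟨f, fun z hz => hfK z (Set.subset_add_left s W'.zero_mem hz), ?_⟩
  by_contra! h
  obtain ⟨z, hz⟩ := hint
  have hf0 : f = 0 := by
    ext v
    obtain ⟨a, ha, b, hb, rfl⟩ := Submodule.mem_sup.1 (hW.sup_eq_top ▸ Submodule.mem_top :
      v ∈ vectorSpan ℝ s ⊔ W')
    simp [h a ha, hfW' b hb]
  simpa [hf0] using hf z hz

lemma exists_isExposed_vectorSpan_lt [FiniteDimensional ℝ E] {s : Set E} (hconv : Convex ℝ s)
    {p u : E} (hp : p ∈ s) (hu : u ∈ vectorSpan ℝ s) (hout : ∀ t : ℝ, 0 < t → p + t • u ∉ s) :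
    ∃ F, IsExposed ℝ s F ∧ p ∈ F ∧ vectorSpan ℝ F < vectorSpan ℝ s := by
  obtain ⟨f, hfs, w, hwW, hfw⟩ := exists_forall_le_of_forall_add_smul_notMem hconv hp hu hout
  refine ⟨f.toExposed s, ContinuousLinearMap.toExposed.isExposed, ⟨hp, hfs⟩,
    (vectorSpan_mono ℝ fun z hz => hz.1).lt_of_ne fun hEq => hfw ?_⟩
  have hker : vectorSpan ℝ (f.toExposed s) ≤ LinearMap.ker (f : E →ₗ[ℝ] ℝ) := by
    rw [vectorSpan_def, Submodule.span_le]
    rintro _ ⟨z₁, h₁, z₂, h₂, rfl⟩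
    have e₁ := le_antisymm (h₁.2 p hp) (hfs z₁ h₁.1)
    have e₂ := le_antisymm (h₂.2 p hp) (hfs z₂ h₂.1)
    simp [← e₁, ← e₂]
  exact hker (hEq ▸ hwW)

lemma IsCompact.exists_add_smul_mem_forall_notMem {s : Set E} (hs : IsCompact s) {x u : E}
    (hx : x ∈ s) (hu : u ≠ 0) :
    ∃ t : ℝ, 0 ≤ t ∧ x + t • u ∈ s ∧ ∀ t' : ℝ, 0 < t' → (x + t • u) + t' • u ∉ s := by
  set T := Set.Ici (0 : ℝ) ∩ (fun t : ℝ => x + t • u) ⁻¹' s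
  have hT : IsCompact T := by
    refine IsCompact.inter_left ?_ isClosed_Ici
    exact ((Homeomorph.addLeft x).isClosedEmbedding.comp
      (isClosedEmbedding_smul_left hu)).isCompact_preimage hs
  have h0T : (0 : ℝ) ∈ T := ⟨Set.mem_Ici.2 le_rfl, by simpa using hx⟩
  obtain ⟨hsup₀, hsup⟩ := hT.sSup_mem ⟨0, h0T⟩
  refine ⟨sSup T, hsup₀, hsup, fun t' ht' hmem => ?_⟩
  have : sSup T + t' ∈ T :=
    ⟨Set.mem_Ici.2 (by linarith [Set.mem_Ici.1 hsup₀]), by simpa [add_smul, add_assoc] using hmem⟩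
  linarith [le_csSup hT.bddAbove this]

lemma mem_segment_sub_smul_add_smul (x u : E) {a b : ℝ} (ha : 0 ≤ a) (hb : 0 ≤ b) :
    x ∈ segment ℝ (x - a • u) (x + b • u) := by
  rcases (add_nonneg ha hb).eq_or_lt with hab | hab
  · obtain ⟨rfl, rfl⟩ : a = 0 ∧ b = 0 := ⟨by linarith, by linarith⟩
    simp
  · refine ⟨b / (a + b), a / (a + b), by positivity, by positivity, by field_simp; ring, ?_⟩
    match_scalars <;> field_simp <;> ring

theorem IsCompact.subset_convexHull_extremePoints [FiniteDimensional ℝ E] {s : Set E}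
    (hs : IsCompact s) (hconv : Convex ℝ s) : s ⊆ convexHull ℝ (s.extremePoints ℝ) := by
  induction hn : Module.finrank ℝ (vectorSpan ℝ s) using Nat.strong_induction_on generalizing s with
  | _ n ih =>
  intro x hx
  by_cases hxe : x ∈ s.extremePoints ℝ
  · exact subset_convexHull ℝ _ hxe
  obtain ⟨x₁, h₁, x₂, h₂, -, hne⟩ : ∃ x₁ ∈ s, ∃ x₂ ∈ s, x ∈ segment ℝ x₁ x₂ ∧ x₁ ≠ x₂ := by
    rw [mem_extremePoints_iff_forall_segment] at hxe
    push Not at hxe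
    obtain ⟨x₁, h₁, x₂, h₂, hseg, hx₁, -⟩ := hxe hx
    refine ⟨x₁, h₁, x₂, h₂, hseg, fun h => hx₁ ?_⟩
    rw [← h, segment_same] at hseg
    exact hseg.symm
  set u := x₂ - x₁
  have hu : u ∈ vectorSpan ℝ s := vsub_mem_vectorSpan ℝ h₂ h₁
  have hu0 : u ≠ 0 := sub_ne_zero.2 hne.symm
  -- the line through `x` in direction `u` leaves `s` at two points, each lying on a proper face
  have face_mem : ∀ v ∈ vectorSpan ℝ s, ∀ p ∈ s, (∀ t : ℝ, 0 < t → p + t • v ∉ s) →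
      p ∈ convexHull ℝ (s.extremePoints ℝ) := by
    intro v hv p hp hout
    obtain ⟨F, hF, hpF, hlt⟩ := exists_isExposed_vectorSpan_lt hconv hp hv hout
    exact convexHull_mono hF.isExtreme.extremePoints_subset_extremePoints <|
      ih _ (hn ▸ Submodule.finrank_lt_finrank_of_lt hlt) (hF.isCompact hs) (hF.convex hconv) rfl hpF
  obtain ⟨a, ha, has, hao⟩ := hs.exists_add_smul_mem_forall_notMem hx (neg_ne_zero.2 hu0)
  obtain ⟨b, hb, hbs, hbo⟩ := hs.exists_add_smul_mem_forall_notMem hx hu0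
  have hseg := mem_segment_sub_smul_add_smul x u ha hb
  rw [sub_eq_add_neg, ← smul_neg] at hseg
  exact (convex_convexHull ℝ _).segment_subset (face_mem _ (neg_mem hu) _ has hao)
    (face_mem _ hu _ hbs hbo) hseg

end Minkowski

section Dot

variable {n : Type*} [Fintype n]

lemma dot_eq_dotProduct (x y : n → ℝ) : dot x y = x ⬝ᵥ y := rfl

lemma continuous_dot_left (x : n → ℝ) : Continuous fun p : n → ℝ => dot p x := by
  simp only [dot_eq_dotProduct]; fun_prop

/-- `min_{p ∈ Q} ⟨p, x⟩`, in the `sInf` form used in the statement; a junk value unless `Q` is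
compact and nonempty. -/
def minDot (Q : Set (n → ℝ)) (x : n → ℝ) : ℝ := sInf ((dot · x) '' Q)

lemma minDot_le {Q : Set (n → ℝ)} (hQ : IsCompact Q) {p : n → ℝ} (hp : p ∈ Q) (x : n → ℝ) :
    minDot Q x ≤ dot p x :=
  csInf_le (hQ.image (continuous_dot_left x)).bddBelow (Set.mem_image_of_mem _ hp)

lemma exists_dot_eq_minDot {Q : Set (n → ℝ)} (hQ : IsCompact Q) (hne : Q.Nonempty)
    (x : n → ℝ) : ∃ p ∈ Q, dot p x = minDot Q x :=
  (hQ.image (continuous_dot_left x)).sInf_mem (hne.image _)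

lemma minDot_smul (Q : Set (n → ℝ)) {c : ℝ} (hc : 0 ≤ c) (x : n → ℝ) :
    minDot Q (c • x) = c * minDot Q x := by
  rw [minDot, minDot, ← smul_eq_mul, ← Real.sInf_smul_of_nonneg hc, ← Set.image_smul,
    Set.image_image]
  simp [dot_eq_dotProduct, dotProduct_smul]

lemma minDot_zero (Q : Set (n → ℝ)) : minDot Q 0 = 0 := by
  simpa using minDot_smul Q le_rfl 0

variable {ι : Type*} [Fintype ι] {P : ι → Set (n → ℝ)}

lemma isLeast_image_dot_sum (hP : ∀ i, IsCompact (P i)) (hne : ∀ i, (P i).Nonempty)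
    (x : n → ℝ) : IsLeast ((dot · x) '' ∑ i, P i) (∑ i, minDot (P i) x) := by
  choose q hqP hq using fun i => exists_dot_eq_minDot (hP i) (hne i) x
  refine ⟨⟨∑ i, q i, Set.finsetSum_mem_finsetSum _ _ _ fun i _ => hqP i, ?_⟩, ?_⟩
  · simp [dot_eq_dotProduct, sum_dotProduct, ← hq]
  · rintro _ ⟨p, hp, rfl⟩
    obtain ⟨g, hg, rfl⟩ := (Set.mem_fintype_sum _ _).1 hp
    simp only [dot_eq_dotProduct, sum_dotProduct]
    exact Finset.sum_le_sum fun i _ => minDot_le (hP i) (hg i) x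

lemma mem_polarDual_sum_iff (hP : ∀ i, IsCompact (P i)) (hne : ∀ i, (P i).Nonempty)
    {z : n → ℝ} : z ∈ polarDual (∑ i, P i) ↔ -1 ≤ ∑ i, minDot (P i) z := by
  rw [← Set.mem_Iic, ← (isLeast_image_dot_sum hP hne z).lowerBounds_eq, mem_lowerBounds,
    Set.forall_mem_image]
  rfl

lemma sum_minDot_neg (hP : ∀ i, IsCompact (P i)) (hne : ∀ i, (P i).Nonempty)
    (h0 : (0 : n → ℝ) ∈ interior (∑ i, P i)) {x : n → ℝ} (hx : x ≠ 0) :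
    ∑ i, minDot (P i) x < 0 := by
  have hlim : Tendsto (fun t : ℝ => -t • x) (𝓝[>] 0) (𝓝 0) := by
    have hc : Continuous fun t : ℝ => -t • x := by fun_prop
    simpa using (hc.tendsto 0).mono_left nhdsWithin_le_nhds
  obtain ⟨t, htP, ht⟩ :=
    ((hlim.eventually (mem_interior_iff_mem_nhds.1 h0)).and self_mem_nhdsWithin).exists
  have hxx : 0 < x ⬝ᵥ x :=
    lt_of_le_of_ne (Finset.sum_nonneg fun i _ => mul_self_nonneg (x i))
      (Ne.symm (dotProduct_self_eq_zero.not.2 hx))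
  calc ∑ i, minDot (P i) x ≤ dot (-t • x) x :=
        (isLeast_image_dot_sum hP hne x).2 (Set.mem_image_of_mem _ htP)
    _ = -(t * (x ⬝ᵥ x)) := by simp [dot_eq_dotProduct, smul_dotProduct]
    _ < 0 := neg_neg_of_pos (mul_pos (Set.mem_Ioi.1 ht) hxx)

end Dot

section Cone

variable {n : Type*} [Fintype n]

lemma subset_coneOver (S : Set (n → ℝ)) : S ⊆ coneOver S :=
  fun x hx => ⟨1, zero_le_one, x, hx, (one_smul ℝ x).symm⟩

lemma coneOver_mono {S T : Set (n → ℝ)} (h : S ⊆ T) : coneOver S ⊆ coneOver T :=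
  fun _ ⟨t, ht, x, hx, hz⟩ => ⟨t, ht, x, h hx, hz⟩

lemma smul_mem_coneOver {S : Set (n → ℝ)} {t : ℝ} (ht : 0 ≤ t) {z : n → ℝ}
    (hz : z ∈ coneOver S) : t • z ∈ coneOver S := by
  obtain ⟨s, hs, x, hx, rfl⟩ := hz
  exact ⟨t * s, mul_nonneg ht hs, x, hx, smul_smul t s x⟩

lemma zero_mem_coneOver {S : Set (n → ℝ)} (hS : S.Nonempty) : (0 : n → ℝ) ∈ coneOver S :=
  hS.elim fun x hx => ⟨0, le_rfl, x, hx, (zero_smul ℝ x).symm⟩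

lemma Convex.add_mem_coneOver {C : Set (n → ℝ)} (hC : Convex ℝ C) {z₁ z₂ : n → ℝ}
    (h₁ : z₁ ∈ coneOver C) (h₂ : z₂ ∈ coneOver C) : z₁ + z₂ ∈ coneOver C := by
  obtain ⟨s, hs, x, hx, rfl⟩ := h₁
  obtain ⟨t, ht, y, hy, rfl⟩ := h₂
  rcases (add_nonneg hs ht).eq_or_lt with hst | hst
  · obtain ⟨rfl, rfl⟩ : s = 0 ∧ t = 0 := ⟨by linarith, by linarith⟩
    exact ⟨0, le_rfl, x, hx, by simp⟩
  · refine ⟨s + t, hst.le, (s / (s + t)) • x + (t / (s + t)) • y,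
      hC hx hy (by positivity) (by positivity) (by field_simp), ?_⟩
    rw [smul_add, smul_smul, smul_smul, mul_div_cancel₀ _ hst.ne', mul_div_cancel₀ _ hst.ne']

lemma Convex.sum_mem_coneOver {C : Set (n → ℝ)} (hC : Convex ℝ C) (hne : C.Nonempty)
    {ι : Type*} {s : Finset ι} {f : ι → n → ℝ} (hf : ∀ i ∈ s, f i ∈ coneOver C) :
    ∑ i ∈ s, f i ∈ coneOver C :=
  Finset.sum_induction f (· ∈ coneOver C) (fun _ _ => hC.add_mem_coneOver)
    (zero_mem_coneOver hne) hf

lemma coneOver_convexHull_subset {S K : Set (n → ℝ)} (hK : Convex ℝ K)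
    (hsmul : ∀ t : ℝ, 0 ≤ t → ∀ z ∈ K, t • z ∈ K) (hS : S ⊆ K) :
    coneOver (convexHull ℝ S) ⊆ K := by
  rintro _ ⟨t, ht, x, hx, rfl⟩
  exact hsmul t ht x (convexHull_min hS hK hx)

lemma dualCone_eq_iInter (σ : Set (n → ℝ)) :
    dualCone σ = ⋂ x ∈ σ, dotProductBilin ℝ ℝ x ⁻¹' Set.Ici 0 := by
  ext; simp [dualCone, dot_eq_dotProduct]

lemma convex_dualCone (σ : Set (n → ℝ)) : Convex ℝ (dualCone σ) := by
  rw [dualCone_eq_iInter]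
  exact convex_iInter₂ fun x _ => (convex_Ici 0).linear_preimage _

lemma smul_mem_dualCone {σ : Set (n → ℝ)} {t : ℝ} (ht : 0 ≤ t) {y : n → ℝ}
    (hy : y ∈ dualCone σ) : t • y ∈ dualCone σ := fun x hx => by
  simpa [dot_eq_dotProduct, dotProduct_smul] using mul_nonneg ht (hy x hx)

lemma dualCone_coneOver_convexHull (S : Set (n → ℝ)) :
    dualCone (coneOver (convexHull ℝ S)) = dualCone S := by
  refine subset_antisymm (fun w hw x hx => hw x (subset_coneOver _ (subset_convexHull ℝ S hx)))
    fun w hw x hx => ?_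
  have hK : {y | 0 ≤ dot y w} = dualCone {w} := by
    ext; simp [dualCone, dot_eq_dotProduct, dotProduct_comm]
  have hS : S ⊆ dualCone {w} := hK ▸ hw
  exact (hK ▸ coneOver_convexHull_subset (convex_dualCone _)
    (fun t ht y hy => smul_mem_dualCone ht hy) hS hx : x ∈ {y | 0 ≤ dot y w})

end Cone

section Polar

variable {n : Type*} [Fintype n]

lemma zero_mem_polarDual (S : Set (n → ℝ)) : (0 : n → ℝ) ∈ polarDual S :=
  fun x _ => by simp [dot_eq_dotProduct]

lemma polarDual_eq_iInter (S : Set (n → ℝ)) :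
    polarDual S = ⋂ x ∈ S, dotProductBilin ℝ ℝ x ⁻¹' Set.Ici (-1) := by
  ext; simp [polarDual, dot_eq_dotProduct]

lemma convex_polarDual (S : Set (n → ℝ)) : Convex ℝ (polarDual S) := by
  rw [polarDual_eq_iInter]
  exact convex_iInter₂ fun x _ => (convex_Ici _).linear_preimage _

lemma isClosed_polarDual (S : Set (n → ℝ)) : IsClosed (polarDual S) := by
  rw [polarDual_eq_iInter]
  exact isClosed_biInter fun x _ =>
    isClosed_Ici.preimage (LinearMap.continuous_of_finiteDimensional _)

lemma isCompact_polarDual [DecidableEq n] {S : Set (n → ℝ)} (h0 : (0 : n → ℝ) ∈ interior S) :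
    IsCompact (polarDual S) := by
  obtain ⟨ε, hε, hball⟩ := Metric.mem_nhds_iff.1 (mem_interior_iff_mem_nhds.1 h0)
  refine Metric.isCompact_of_isClosed_isBounded (isClosed_polarDual S)
    (isBounded_iff_forall_norm_le.2 ⟨2 / ε, fun z hz => ?_⟩)
  refine (pi_norm_le_iff_of_nonneg (by positivity)).2 fun i => ?_
  -- test `z` against the points `± (ε / 2) eᵢ` of the ball
  have htest : ∀ c : ℝ, |c| = ε / 2 → -1 ≤ c * z i := fun c hc => by
    have hmem : Pi.single i c ∈ Metric.ball (0 : n → ℝ) ε := by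
      rw [mem_ball_zero_iff, Pi.norm_single, Real.norm_eq_abs, hc]
      linarith
    simpa [dot_eq_dotProduct, single_dotProduct] using hz _ (hball hmem)
  have h₁ := htest (ε / 2) (abs_of_pos (by positivity))
  have h₂ := htest (-(ε / 2)) (by rw [abs_neg, abs_of_pos (by positivity)])
  rw [Real.norm_eq_abs, le_div_iff₀ hε]
  cases abs_cases (z i) <;> nlinarith

lemma nonempty_extremePoints_polarDual [DecidableEq n] {S : Set (n → ℝ)}
    (h0 : (0 : n → ℝ) ∈ interior S) : ((polarDual S).extremePoints ℝ).Nonempty :=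
  (isCompact_polarDual h0).extremePoints_nonempty ⟨0, zero_mem_polarDual S⟩

lemma IsPolytope.isCompact {P : Set (n → ℝ)} (h : IsPolytope P) : IsCompact P := by
  obtain ⟨F, hF, rfl⟩ := h
  exact hF.isCompact_convexHull (𝕜 := ℝ)

end Polar

section Cayley

variable {d r : ℕ} {P : Fin r → Set (Fin d → ℝ)}

lemma dot_pairPt (x x' : Fin d → ℝ) (y y' : Fin r → ℝ) :
    dot (pairPt x y) (pairPt x' y') = dot x x' + dot y y' := by
  simp [dot, pairPt, Fintype.sum_sum_type]

lemma dot_stdB (j : Fin r) (y : Fin r → ℝ) : dot (stdB j) y = y j := by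
  simp [dot, stdB]

lemma pairPt_mem_dualCone_cayley_iff (hP : ∀ i, IsCompact (P i)) (hne : ∀ i, (P i).Nonempty)
    {x : Fin d → ℝ} {y : Fin r → ℝ} :
    pairPt x y ∈ dualCone (cayley P) ↔ ∀ j, 0 ≤ minDot (P j) x + y j := by
  rw [cayley, dualCone_coneOver_convexHull]
  refine ⟨fun h j => ?_, fun h z hz => ?_⟩
  · obtain ⟨p, hp, hpx⟩ := exists_dot_eq_minDot (hP j) (hne j) x
    simpa [dot_pairPt, dot_stdB, hpx] using h _ (Set.mem_iUnion.2 ⟨j, p, hp, rfl⟩)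
  · obtain ⟨j, p, hp, rfl⟩ := Set.mem_iUnion.1 hz
    rw [dot_pairPt, dot_stdB]
    exact (h j).trans (by gcongr; exact minDot_le (hP j) hp x)

def cayleyLift (P : Fin r → Set (Fin d → ℝ)) (x : Fin d → ℝ) : Fin d ⊕ Fin r → ℝ :=
  pairPt x fun i => -minDot (P i) x

lemma cayleyLift_smul (P : Fin r → Set (Fin d → ℝ)) {c : ℝ} (hc : 0 ≤ c) (x : Fin d → ℝ) :
    cayleyLift P (c • x) = c • cayleyLift P x := by
  ext (i | i) <;> simp [cayleyLift, pairPt, minDot_smul _ hc]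

lemma pairPt_eq_cayleyLift_add_sum (P : Fin r → Set (Fin d → ℝ)) (x : Fin d → ℝ)
    (y : Fin r → ℝ) :
    pairPt x y = cayleyLift P x + ∑ j, (minDot (P j) x + y j) • pairPt 0 (stdB j) := by
  ext (i | i) <;> simp [cayleyLift, pairPt, stdB, Finset.sum_apply]

lemma cayleyLift_mem_convexHull (hP : ∀ i, IsCompact (P i)) (hne : ∀ i, (P i).Nonempty)
    (hQ : IsCompact (polarDual (∑ i, P i))) {x : Fin d → ℝ} (hx : ∑ i, minDot (P i) x = -1) :
    cayleyLift P x ∈ convexHull ℝ (cayleyLift P '' (polarDual (∑ i, P i)).extremePoints ℝ) := by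
  set Q := polarDual (∑ i, P i)
  choose v hvP hv using fun i => exists_dot_eq_minDot (hP i) (hne i) x
  have hvQ : ∀ z ∈ Q, -1 ≤ (∑ i, v i) ⬝ᵥ z :=
    fun z hz => hz _ (Set.finsetSum_mem_finsetSum _ _ _ fun i _ => hvP i)
  have hvx : (∑ i, v i) ⬝ᵥ x = -1 := by simp [sum_dotProduct, ← dot_eq_dotProduct, hv, hx]
  -- the face of `Q` on which `⟨∑ vᵢ, ·⟩` attains its minimum `-1`
  let l : StrongDual ℝ (Fin d → ℝ) :=
    -LinearMap.toContinuousLinearMap (dotProductBilin ℝ ℝ (∑ i, v i))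
  have hl : ∀ y, l y = -((∑ i, v i) ⬝ᵥ y) := fun y => rfl
  have hF : IsExposed ℝ Q (l.toExposed Q) := ContinuousLinearMap.toExposed.isExposed
  have hxF : x ∈ l.toExposed Q := ⟨(mem_polarDual_sum_iff hP hne).2 hx.ge, fun y hy => by
    rw [hl, hl, neg_le_neg_iff, hvx]
    exact hvQ y hy⟩
  let L : (Fin d → ℝ) →ₗ[ℝ] (Fin d ⊕ Fin r → ℝ) := (fromRows 1 (-of v)).mulVecLin
  have hlin : ∀ z ∈ l.toExposed Q, cayleyLift P z = L z := by
    intro z hz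
    have hle : ∀ i ∈ Finset.univ, minDot (P i) z ≤ dot (v i) z :=
      fun i _ => minDot_le (hP i) (hvP i) z
    have hvz : (∑ i, v i) ⬝ᵥ z ≤ -1 := by
      have := hz.2 x hxF.1
      rwa [hl, hl, neg_le_neg_iff, hvx] at this
    have hsum : ∑ i, minDot (P i) z = ∑ i, dot (v i) z := by
      refine le_antisymm (Finset.sum_le_sum hle) ?_
      simp only [dot_eq_dotProduct, ← sum_dotProduct]
      exact hvz.trans ((mem_polarDual_sum_iff hP hne).1 hz.1)
    have heq : ∀ i, minDot (P i) z = dot (v i) z :=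
      fun i => (Finset.sum_eq_sum_iff_of_le hle).1 hsum i (Finset.mem_univ i)
    simp only [cayleyLift, heq, L, mulVecLin_apply, fromRows_mulVec, one_mulVec, neg_mulVec]
    rfl
  have hxhull := (hF.isCompact hQ).subset_convexHull_extremePoints
    (hF.convex (convex_polarDual _)) hxF
  rw [hlin x hxF]
  refine convexHull_mono ?_ (LinearMap.image_convexHull L _ ▸ Set.mem_image_of_mem L hxhull)
  rintro _ ⟨z, hz, rfl⟩
  exact ⟨z, hF.isExtreme.extremePoints_subset_extremePoints hz, hlin z hz.1⟩

lemma cayleyLift_mem_coneOver (hP : ∀ i, IsCompact (P i)) (hne : ∀ i, (P i).Nonempty)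
    (h0 : (0 : Fin d → ℝ) ∈ interior (∑ i, P i)) (x : Fin d → ℝ) :
    cayleyLift P x ∈
      coneOver (convexHull ℝ (cayleyLift P '' (polarDual (∑ i, P i)).extremePoints ℝ)) := by
  rcases eq_or_ne x 0 with rfl | hx
  · have h : cayleyLift P 0 = 0 := by simpa using cayleyLift_smul P le_rfl (0 : Fin d → ℝ)
    rw [h]
    exact zero_mem_coneOver (((nonempty_extremePoints_polarDual h0).image _).mono
      (subset_convexHull ℝ _))
  set c := -∑ i, minDot (P i) x
  have hc : 0 < c := neg_pos.2 (sum_minDot_neg hP hne h0 hx)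
  have hx' : ∑ i, minDot (P i) (c⁻¹ • x) = -1 := by
    simp only [minDot_smul _ (inv_nonneg.2 hc.le), ← Finset.mul_sum]
    field_simp
    simp [c]
  have hcx : x = c • c⁻¹ • x := (smul_inv_smul₀ hc.ne' x).symm
  rw [hcx, cayleyLift_smul P hc.le]
  exact smul_mem_coneOver hc.le
    (subset_coneOver _ (cayleyLift_mem_convexHull hP hne (isCompact_polarDual h0) hx'))

lemma dualCone_cayley_subset (hP : ∀ i, IsCompact (P i)) (hne : ∀ i, (P i).Nonempty)
    (h0 : (0 : Fin d → ℝ) ∈ interior (∑ i, P i)) :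
    dualCone (cayley P) ⊆ coneOver (convexHull ℝ
      (cayleyLift P '' (polarDual (∑ i, P i)).extremePoints ℝ ∪ ⋃ j, {pairPt 0 (stdB j)})) := by
  set T := cayleyLift P '' (polarDual (∑ i, P i)).extremePoints ℝ ∪ ⋃ j, {pairPt 0 (stdB j)}
  have hT : (convexHull ℝ T).Nonempty :=
    ((nonempty_extremePoints_polarDual h0).image _).mono
      (Set.subset_union_left.trans (subset_convexHull ℝ T))
  intro w hw
  obtain ⟨x, y, rfl⟩ : ∃ x y, w = pairPt x y := ⟨_, _, (Sum.elim_comp_inl_inr w).symm⟩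
  rw [pairPt_mem_dualCone_cayley_iff hP hne] at hw
  rw [pairPt_eq_cayleyLift_add_sum P x y]
  refine (convex_convexHull ℝ T).add_mem_coneOver
    (coneOver_mono (convexHull_mono Set.subset_union_left) (cayleyLift_mem_coneOver hP hne h0 x))
    ((convex_convexHull ℝ T).sum_mem_coneOver hT fun j _ => smul_mem_coneOver (hw j) ?_)
  exact subset_coneOver _ (subset_convexHull ℝ T (Or.inr (Set.mem_iUnion.2 ⟨j, rfl⟩)))

lemma coneOver_subset_dualCone_cayley (hP : ∀ i, IsCompact (P i)) (hne : ∀ i, (P i).Nonempty)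
    (A : Set (Fin d → ℝ)) :
    coneOver (convexHull ℝ (cayleyLift P '' A ∪ ⋃ j, {pairPt 0 (stdB j)})) ⊆
      dualCone (cayley P) := by
  refine coneOver_convexHull_subset (convex_dualCone _) (fun t ht _ => smul_mem_dualCone ht)
    (Set.union_subset ?_ (Set.iUnion_subset fun k => Set.singleton_subset_iff.2 ?_))
  · rintro _ ⟨x, -, rfl⟩
    rw [cayleyLift, pairPt_mem_dualCone_cayley_iff hP hne]
    simp
  · rw [pairPt_mem_dualCone_cayley_iff hP hne]
    intro j
    simp only [minDot_zero, stdB, zero_add]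
    split_ifs <;> norm_num

end Cayley

theorem dual_cayley_cone_general {d r : ℕ} (P : Fin r → Set (Fin d → ℝ))
    (hpoly : ∀ i, IsPolytope (P i)) (h0 : (0 : Fin d → ℝ) ∈ interior (∑ i, P i)) :
    dualCone (cayley P) =
      coneOver (convexHull ℝ
        ({z : (Fin d ⊕ Fin r) → ℝ | ∃ x ∈ Set.extremePoints ℝ (polarDual (∑ i, P i)),
            z = pairPt x (fun i => -sInf {t : ℝ | ∃ p ∈ P i, dot p x = t})} ∪
          ⋃ j, {pairPt 0 (stdB j)})) := by
  have hP : ∀ i, IsCompact (P i) := fun i => (hpoly i).isCompact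
  obtain ⟨g, hg, -⟩ := (Set.mem_fintype_sum _ _).1 (interior_subset h0)
  have hne : ∀ i, (P i).Nonempty := fun i => ⟨g i, hg i⟩
  have hS : {z : (Fin d ⊕ Fin r) → ℝ | ∃ x ∈ Set.extremePoints ℝ (polarDual (∑ i, P i)),
      z = pairPt x (fun i => -sInf {t : ℝ | ∃ p ∈ P i, dot p x = t})} =
      cayleyLift P '' (polarDual (∑ i, P i)).extremePoints ℝ :=
    Set.ext fun _ => exists_congr fun _ => and_congr_right fun _ => eq_comm
  rw [hS]
  exact subset_antisymm (dualCone_cayley_subset hP hne h0)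
    (coneOver_subset_dualCone_cayley hP hne _)

/-- Let `P₁,…,P_r` be polytopes in `ℝ^d` such that `P = P₁ + ⋯ + P_r` is
`d`-dimensional with `0` in its interior. Then the dual of the Cayley cone is
`C(P₁,…,P_r)^∨ = ℝ≥0 · conv({(x, (−min⟨P₁,x⟩,…,−min⟨P_r,x⟩)) : x extreme point of P*}
∪ {(0,e₁),…,(0,e_r)})`. -/
theorem dual_cayley_cone {d r : ℕ} (hd : 0 < d) (P : Fin r → Set (Fin d → ℝ))
    (hpoly : ∀ i, IsPolytope (P i)) (h0 : (0 : Fin d → ℝ) ∈ interior (∑ i, P i)) :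
    dualCone (cayley P) =
      coneOver (convexHull ℝ
        ({z : (Fin d ⊕ Fin r) → ℝ | ∃ x ∈ Set.extremePoints ℝ (polarDual (∑ i, P i)),
            z = pairPt x (fun i => -sInf {t : ℝ | ∃ p ∈ P i, dot p x = t})} ∪
          ⋃ j, {pairPt 0 (stdB j)})) :=
  dual_cayley_cone_general P hpoly h0
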